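/- Let A be a ring, N an A-module, and n a nonnegative integer. Suppose 0 → N → E_0 → ⋯ → E_{n-1} → D → 0 is exact with each E_i injective. If every A-module of finite flat dimension has projective dimension at most n, then D is strongly cotorsion. -/

import Mathlib

open CategoryTheory

universe u

noncomputable section

variable (A : Type u) [Ring A]

/-- `Ext^n_A(M,N)`, as a `ℤ`-module, for left modules over an arbitrary ring `A`. -/
abbrev extAb (n : ℕ) (M N : ModuleCat.{u} A) : ModuleCat.{u} ℤ :=
  ((Ext ℤ (ModuleCat.{u} A) n).obj (Opposite.op M)).obj N

/-- Vanishing of `Ext^n_A(M,N)`. -/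
def ExtVanish (n : ℕ) (M N : ModuleCat.{u} A) : Prop :=
  Subsingleton (extAb A n M N)

/-- The subgroup of `E ⊗_ℤ M` by which one divides to obtain `E ⊗_A M`,
for a right `A`-module `E` and a left `A`-module `M`. -/
def tensorRel (E : Type u) [AddCommGroup E] [Module Aᵐᵒᵖ E]
    (M : Type u) [AddCommGroup M] [Module A M] :
    Submodule ℤ (TensorProduct ℤ E M) :=
  Submodule.span ℤ {x | ∃ (e : E) (a : A) (m : M),
    x = (MulOpposite.op a • e) ⊗ₜ[ℤ] m - e ⊗ₜ[ℤ] (a • m)}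

/-- The tensor product `E ⊗_A M` of a right `A`-module `E` and a left `A`-module `M`. -/
abbrev RTensor (E : Type u) [AddCommGroup E] [Module Aᵐᵒᵖ E]
    (M : Type u) [AddCommGroup M] [Module A M] : Type u :=
  TensorProduct ℤ E M ⧸ tensorRel A E M

/-- Functoriality of `E ⊗_A -` in the left-module variable. -/
def RTensor.map (E : Type u) [AddCommGroup E] [Module Aᵐᵒᵖ E]
    {M N : Type u} [AddCommGroup M] [Module A M] [AddCommGroup N] [Module A N]
    (f : M →ₗ[A] N) : RTensor A E M →ₗ[ℤ] RTensor A E N :=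
  Submodule.mapQ _ _ (LinearMap.lTensor E f.toAddMonoidHom.toIntLinearMap) (by
    simp only [tensorRel]
    rw [Submodule.span_le]
    rintro x ⟨e, a, m, rfl⟩
    refine Submodule.mem_comap.mpr (Submodule.subset_span ⟨e, a, f m, ?_⟩)
    refine (map_sub _ _ _).trans ?_
    erw [LinearMap.lTensor_tmul, LinearMap.lTensor_tmul]
    simp [LinearMap.map_smul])

/-- Functoriality of `- ⊗_A M` in the right-module variable. -/
def RTensor.mapRight {E E' : Type u} [AddCommGroup E] [Module Aᵐᵒᵖ E]
    [AddCommGroup E'] [Module Aᵐᵒᵖ E']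
    (M : Type u) [AddCommGroup M] [Module A M]
    (g : E →ₗ[Aᵐᵒᵖ] E') : RTensor A E M →ₗ[ℤ] RTensor A E' M :=
  Submodule.mapQ _ _ (LinearMap.rTensor M g.toAddMonoidHom.toIntLinearMap) (by
    simp only [tensorRel]
    rw [Submodule.span_le]
    rintro x ⟨e, a, m, rfl⟩
    refine Submodule.mem_comap.mpr (Submodule.subset_span ⟨g e, a, m, ?_⟩)
    refine (map_sub _ _ _).trans ?_
    erw [LinearMap.rTensor_tmul, LinearMap.rTensor_tmul]
    simp [LinearMap.map_smul])

/-- A left `A`-module `M` is flat if `- ⊗_A M` preserves injectivity of maps of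
right `A`-modules. -/
def IsFlat (M : Type u) [AddCommGroup M] [Module A M] : Prop :=
  ∀ (E E' : Type u) [AddCommGroup E] [Module Aᵐᵒᵖ E] [AddCommGroup E'] [Module Aᵐᵒᵖ E']
    (g : E →ₗ[Aᵐᵒᵖ] E'), Function.Injective g →
      Function.Injective (RTensor.mapRight A M g)

/-- A right `A`-module `E` is flat if `E ⊗_A -` preserves injectivity of maps of
left `A`-modules. -/
def IsFlatRight (E : Type u) [AddCommGroup E] [Module Aᵐᵒᵖ E] : Prop :=
  ∀ (M N : Type u) [AddCommGroup M] [Module A M] [AddCommGroup N] [Module A N]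
    (f : M →ₗ[A] N), Function.Injective f →
      Function.Injective (RTensor.map A E f)

/-- An `A`-module `C` is cotorsion if `Ext^1_A(F,C) = 0` for every flat `F`. -/
def Cotorsion (M : ModuleCat.{u} A) : Prop :=
  ∀ F : ModuleCat.{u} A, IsFlat A F → ExtVanish A 1 F M

/-- Flat dimension at most `n`. -/
def FlatDimLE : ℕ → ModuleCat.{u} A → Prop
  | 0, M => IsFlat A M
  | n + 1, M => ∃ (F : ModuleCat.{u} A) (π : F ⟶ M), IsFlat A F ∧
      Function.Surjective π ∧
      FlatDimLE n (ModuleCat.of A (LinearMap.ker (π.hom : F →ₗ[A] M)))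

/-- Finite flat dimension. -/
def FiniteFlatDim (M : ModuleCat.{u} A) : Prop := ∃ n, FlatDimLE A n M

/-- An `A`-module `M` is strongly cotorsion if `Ext^1_A(L,M) = 0` for every `L` of
finite flat dimension. -/
def StronglyCotorsion (M : ModuleCat.{u} A) : Prop :=
  ∀ L : ModuleCat.{u} A, FiniteFlatDim A L → ExtVanish A 1 L M

/-- Projective dimension at most `n`. -/
def ProjDimLE : ℕ → ModuleCat.{u} A → Prop
  | 0, M => Module.Projective A M
  | n + 1, M => ∃ (F : ModuleCat.{u} A) (π : F ⟶ M), Module.Projective A F ∧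
      Function.Surjective π ∧
      ProjDimLE n (ModuleCat.of A (LinearMap.ker (π.hom : F →ₗ[A] M)))

/-- A `ℤ`-indexed complex of `A`-modules (differential of degree `-1`). -/
structure ModComplex where
  X : ℤ → ModuleCat.{u} A
  d : ∀ i : ℤ, X (i + 1) ⟶ X i
  dd : ∀ i : ℤ, d (i + 1) ≫ d i = 0

/-- Acyclicity (exactness at every degree) of a complex. -/
def ModComplex.Acyclic (C : ModComplex A) : Prop :=
  ∀ i : ℤ, LinearMap.range ((C.d (i + 1)).hom : C.X (i + 1 + 1) →ₗ[A] C.X (i + 1)) =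
    LinearMap.ker ((C.d i).hom : C.X (i + 1) →ₗ[A] C.X i)

/-- `G` is Gorenstein injective: a cycle of a totally acyclic complex of injectives. -/
def GorensteinInjective (G : ModuleCat.{u} A) : Prop :=
  ∃ C : ModComplex A,
    (∀ i, Module.Injective A (C.X i)) ∧ C.Acyclic ∧
    (∀ E : ModuleCat.{u} A, Module.Injective A E →
      ∀ (i : ℤ) (f : E ⟶ C.X (i + 1)), f ≫ C.d i = 0 →
        ∃ g : E ⟶ C.X (i + 1 + 1), g ≫ C.d (i + 1) = f) ∧
    Nonempty (G ≃ₗ[A] LinearMap.ker ((C.d (-1)).hom : C.X (-1 + 1) →ₗ[A] C.X (-1)))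

/-- `G` is Gorenstein projective: a cycle of a totally acyclic complex of projectives. -/
def GorensteinProjective (G : ModuleCat.{u} A) : Prop :=
  ∃ C : ModComplex A,
    (∀ i, Module.Projective A (C.X i)) ∧ C.Acyclic ∧
    (∀ Q : ModuleCat.{u} A, Module.Projective A Q →
      ∀ (i : ℤ) (f : C.X (i + 1) ⟶ Q), C.d (i + 1) ≫ f = 0 →
        ∃ g : C.X i ⟶ Q, C.d i ≫ g = f) ∧
    Nonempty (G ≃ₗ[A] LinearMap.ker ((C.d (-1)).hom : C.X (-1 + 1) →ₗ[A] C.X (-1)))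

/-- `G` is Gorenstein flat: a cycle of an acyclic complex of flats which stays acyclic
after applying `E ⊗_A -` for every injective right `A`-module `E`. -/
def GorensteinFlat (G : ModuleCat.{u} A) : Prop :=
  ∃ C : ModComplex A,
    (∀ i, IsFlat A (C.X i)) ∧ C.Acyclic ∧
    (∀ (E : Type u) [AddCommGroup E] [Module Aᵐᵒᵖ E], Module.Injective Aᵐᵒᵖ E →
      ∀ i : ℤ,
        LinearMap.range (RTensor.map A E ((C.d (i + 1)).hom : C.X (i + 1 + 1) →ₗ[A] C.X (i + 1))) =
        LinearMap.ker (RTensor.map A E ((C.d i).hom : C.X (i + 1) →ₗ[A] C.X i))) ∧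
    Nonempty (G ≃ₗ[A] LinearMap.ker ((C.d (-1)).hom : C.X (-1 + 1) →ₗ[A] C.X (-1)))

/-- Flat-cotorsion module. -/
def FlatCotorsion (M : ModuleCat.{u} A) : Prop := IsFlat A M ∧ Cotorsion A M

/-- `G` is Gorenstein flat-cotorsion: a cokernel of a totally acyclic complex of
flat-cotorsion modules. -/
def GorensteinFlatCotorsion (G : ModuleCat.{u} A) : Prop :=
  ∃ C : ModComplex A,
    (∀ i, FlatCotorsion A (C.X i)) ∧ C.Acyclic ∧
    (∀ W : ModuleCat.{u} A, FlatCotorsion A W →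
      ∀ (i : ℤ) (f : C.X (i + 1) ⟶ W), C.d (i + 1) ≫ f = 0 →
        ∃ g : C.X i ⟶ W, C.d i ≫ g = f) ∧
    Nonempty (G ≃ₗ[A]
      (C.X 0 ⧸ LinearMap.range ((C.d 0).hom : C.X (0 + 1) →ₗ[A] C.X 0)))

/-- Gorenstein injective dimension at most `n`: `M` has an injective coresolution whose
`n`-th cosyzygy is Gorenstein injective. -/
def GidLE : ℕ → ModuleCat.{u} A → Prop
  | 0, M => GorensteinInjective A M
  | n + 1, M => ∃ (I : ModuleCat.{u} A) (ι : M ⟶ I), Module.Injective A I ∧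
      Function.Injective ι ∧
      GidLE n (ModuleCat.of A (I ⧸ LinearMap.range (ι.hom : M →ₗ[A] I)))

/-- Injective dimension at most `n`. -/
def InjDimLE : ℕ → ModuleCat.{u} A → Prop
  | 0, M => Module.Injective A M
  | n + 1, M => ∃ (I : ModuleCat.{u} A) (ι : M ⟶ I), Module.Injective A I ∧
      Function.Injective ι ∧
      InjDimLE n (ModuleCat.of A (I ⧸ LinearMap.range (ι.hom : M →ₗ[A] I)))

/-- Gorenstein flat dimension at most `n`. -/
def GfdLE : ℕ → ModuleCat.{u} A → Prop
  | 0, M => GorensteinFlat A M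
  | n + 1, M => ∃ (F : ModuleCat.{u} A) (π : F ⟶ M), IsFlat A F ∧
      Function.Surjective π ∧
      GfdLE n (ModuleCat.of A (LinearMap.ker (π.hom : F →ₗ[A] M)))

/-- The Gorenstein injective dimension, as an extended natural number. -/
def gid (M : ModuleCat.{u} A) : ℕ∞ := sInf {n : ℕ∞ | ∃ k : ℕ, n = k ∧ GidLE A k M}

/-- The injective dimension, as an extended natural number. -/
def injDim (M : ModuleCat.{u} A) : ℕ∞ := sInf {n : ℕ∞ | ∃ k : ℕ, n = k ∧ InjDimLE A k M}

/-- The projective dimension, as an extended natural number. -/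
def projDim (M : ModuleCat.{u} A) : ℕ∞ := sInf {n : ℕ∞ | ∃ k : ℕ, n = k ∧ ProjDimLE A k M}

/-- The finitistic projective dimension of `A`. -/
def FPD : ℕ∞ := sSup {d : ℕ∞ | ∃ M : ModuleCat.{u} A, d = projDim A M ∧ d ≠ ⊤}

/-- `D` is an `n`-th cosyzygy of `N` with respect to an injective coresolution:
there is an exact sequence `0 → N → E_0 → ⋯ → E_{n-1} → D → 0` with the `E_i` injective. -/
def CosyzygyOf : ℕ → ModuleCat.{u} A → ModuleCat.{u} A → Prop
  | 0, N, D => Nonempty (N ≃ₗ[A] D)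
  | n + 1, N, D => ∃ (E : ModuleCat.{u} A) (ι : N ⟶ E), Module.Injective A E ∧
      Function.Injective ι ∧
      CosyzygyOf n (ModuleCat.of A (E ⧸ LinearMap.range (ι.hom : N →ₗ[A] E))) D

/-- `M` is an `n`-th syzygy of `N` with respect to a resolution by flat modules:
there is an exact sequence `0 → M → F_{n-1} → ⋯ → F_0 → N → 0` with the `F_i` flat. -/
def SyzygyOf : ℕ → ModuleCat.{u} A → ModuleCat.{u} A → Prop
  | 0, M, N => Nonempty (M ≃ₗ[A] N)
  | n + 1, M, N => ∃ (F : ModuleCat.{u} A) (ι : M ⟶ F), IsFlat A F ∧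
      Function.Injective ι ∧
      SyzygyOf n (ModuleCat.of A (F ⧸ LinearMap.range (ι.hom : M →ₗ[A] F))) N

end


/-! `extAb` is the classical `Ext`, obtained by deriving `Hom` in the first variable. In positive
degrees it vanishes exactly when the derived-category `Abelian.Ext` does, since for a projective
resolution `P` of `L` both say that every cocycle of `Hom(P, Y)` in that degree is a coboundary.
For `Abelian.Ext`, the long exact sequence of `0 → N → E → N' → 0` with `E` injective makes the
connecting map `Ext^{j+1}(L, N') → Ext^{j+2}(L, N)` injective; along the coresolution this embeds
`Ext^1(L, D)` into `Ext^{n+1}(L, N)`, which is zero because `L` has projective dimension at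
most `n`. -/

universe v w w'

namespace CategoryTheory.ProjectiveResolution

variable {C : Type v} [Category.{w} C] [Abelian C] {X : C} (P : ProjectiveResolution X) (Y : C)

lemma linearYonedaObj_exactAt_succ_iff (p : ℕ) :
    (P.complex.linearYonedaObj ℤ Y).ExactAt (p + 1) ↔
      ∀ f : P.complex.X (p + 1) ⟶ Y, P.complex.d (p + 2) (p + 1) ≫ f = 0 →
        ∃ g : P.complex.X p ⟶ Y, P.complex.d (p + 1) p ≫ g = f := by
  rw [HomologicalComplex.exactAt_iff' _ p (p + 1) (p + 2) (by simp) (by simp),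
    ShortComplex.moduleCat_exact_iff]
  rfl

lemma subsingleton_ext_iff_exactAt [EnoughProjectives C] (n : ℕ) :
    Subsingleton (((Ext ℤ C n).obj (Opposite.op X)).obj Y) ↔
      (P.complex.linearYonedaObj ℤ Y).ExactAt n := by
  rw [HomologicalComplex.exactAt_iff_isZero_homology, ← ModuleCat.isZero_iff_subsingleton]
  exact Iso.isZero_iff (P.isoExt n Y)

lemma subsingleton_abelianExt_succ_iff [HasExt.{w'} C] (p : ℕ) :
    Subsingleton (Abelian.Ext X Y (p + 1)) ↔
      ∀ f : P.complex.X (p + 1) ⟶ Y, P.complex.d (p + 2) (p + 1) ≫ f = 0 →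
        ∃ g : P.complex.X p ⟶ Y, P.complex.d (p + 1) p ≫ g = f := by
  constructor
  · intro _ f hf
    exact (P.extMk_eq_zero_iff f (p + 2) rfl hf p rfl).1 (Subsingleton.elim _ _)
  · intro h
    refine subsingleton_of_forall_eq 0 fun α => ?_
    obtain ⟨f, hf, rfl⟩ := P.extMk_surjective α (p + 2) rfl
    exact (P.extMk_eq_zero_iff f (p + 2) rfl hf p rfl).2 (h f hf)

end CategoryTheory.ProjectiveResolution

namespace CategoryTheory.Abelian.Ext

variable {C : Type v} [Category.{w} C] [Abelian C] [HasExt.{w'} C]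

lemma subsingleton_of_iso {X Y Y' : C} (e : Y ≅ Y') (n : ℕ) [Subsingleton (Ext X Y n)] :
    Subsingleton (Ext X Y' n) := by
  have h : ∀ α : Ext X Y' n, (α.comp (mk₀ e.inv) (add_zero n)).comp (mk₀ e.hom) (add_zero n) = α :=
    fun α => by simp [mk₀_comp_mk₀]
  exact ⟨fun α β => by rw [← h α, ← h β, Subsingleton.elim (α.comp _ _) (β.comp _ _)]⟩

lemma subsingleton_X₃_of_injective_X₂ {S : ShortComplex C} (hS : S.ShortExact)
    [Injective S.X₂] (X : C) (j : ℕ) [Subsingleton (Ext X S.X₁ (j + 2))] :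
    Subsingleton (Ext X S.X₃ (j + 1)) := by
  refine subsingleton_of_forall_eq 0 fun x => ?_
  obtain ⟨y, rfl⟩ := covariant_sequence_exact₃ X hS x rfl (Subsingleton.elim _ _)
  rw [eq_zero_of_injective y, zero_comp]

end CategoryTheory.Abelian.Ext

lemma subsingleton_ext_succ_iff_subsingleton_abelianExt {C : Type v} [Category.{w} C] [Abelian C]
    [EnoughProjectives C] [HasExt.{w'} C] (X Y : C) (p : ℕ) :
    Subsingleton (((Ext ℤ C (p + 1)).obj (Opposite.op X)).obj Y) ↔
      Subsingleton (Abelian.Ext X Y (p + 1)) := by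
  obtain ⟨P⟩ := HasProjectiveResolution.out (Z := X)
  rw [P.subsingleton_ext_iff_exactAt, P.linearYonedaObj_exactAt_succ_iff,
    P.subsingleton_abelianExt_succ_iff]

section

variable {A : Type u} [Ring A]

lemma subsingleton_abelianExt_of_cosyzygyOf {n : ℕ} {N D : ModuleCat.{u} A}
    (hc : CosyzygyOf A n N D) (L : ModuleCat.{u} A) (j : ℕ)
    [Subsingleton (Abelian.Ext L N (j + n + 1))] : Subsingleton (Abelian.Ext L D (j + 1)) := by
  induction n generalizing N with
  | zero =>
    obtain ⟨e⟩ := hc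
    exact Abelian.Ext.subsingleton_of_iso e.toModuleIso _
  | succ n ih =>
    obtain ⟨E, ι, hE, hι, hc⟩ := hc
    have : Injective E := Module.injective_object_of_injective_module A E
    have hS := ModuleCat.shortComplex_shortExact
      (ModuleCat.shortComplexOfCompEqZero _ _ ι.hom.exact_map_mkQ_range.linearMap_comp_eq_zero)
      ι.hom.exact_map_mkQ_range hι (Submodule.mkQ_surjective _)
    have := Abelian.Ext.subsingleton_X₃_of_injective_X₂ hS L (j + n)
    exact ih hc

lemma hasProjectiveDimensionLT_of_projDimLE {n : ℕ} {L : ModuleCat.{u} A}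
    (hL : ProjDimLE A n L) : HasProjectiveDimensionLT L (n + 1) := by
  induction n generalizing L with
  | zero =>
    exact projective_iff_hasProjectiveDimensionLT_one.1 ((IsProjective.iff_projective L).1 hL)
  | succ n ih =>
    obtain ⟨F, π, hF, hπ, hK⟩ := hL
    have := projective_iff_hasProjectiveDimensionLT_one.1 ((IsProjective.iff_projective F).1 hF)
    have hF := hasProjectiveDimensionLT_of_ge F 1 (n + 2) (by omega)
    exact (LinearMap.shortExact_shortComplexKer hπ).hasProjectiveDimensionLT_X₃ (n + 1) (ih hK) hF

end

/-- if `D` is an `n`-th cosyzygy of `N` in an injective coresolution and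
every module of finite flat dimension has projective dimension at most `n`, then `D` is
strongly cotorsion. -/
theorem stmt15 (A : Type u) [Ring A] (n : ℕ) (N D : ModuleCat.{u} A)
    (h : ∀ L : ModuleCat.{u} A, FiniteFlatDim A L → ProjDimLE A n L)
    (hc : CosyzygyOf A n N D) :
    StronglyCotorsion A D := by
  intro L hL
  have := hasProjectiveDimensionLT_of_projDimLE (h L hL)
  have := HasProjectiveDimensionLT.subsingleton L (n + 1) (0 + n + 1) (by omega) N
  exact (subsingleton_ext_succ_iff_subsingleton_abelianExt L D 0).2
    (subsingleton_abelianExt_of_cosyzygyOf hc L 0)
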